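/- Let m, k be positive natural numbers. Let A be an m×k complex matrix, a an m×1 complex matrix, and form the m×(k+1) matrix Â = [A | a] by appending the column a to A. Let M be an m×m Hermitian positive definite complex matrix, and let N be the (k+1)×(k+1) block matrix N = fromBlocks N₁ l lᴴ ν (with N₁ ∈ ℂ^{k×k}, l ∈ ℂ^{k×1}, ν ∈ ℂ^{1×1}); assume N is Hermitian positive definite (so N₁ is invertible). Let X ∈ ℂ^{k×m} be the weighted Moore-Penrose inverse of A with respect to (M, N₁). Set d = X*a ∈ ℂ^{k×1} and c = a − A*d ∈ ℂ^{m×1}, and assume c = 0. Define the 1×1 matrix δ = ν + dᴴ*N₁*d − (dᴴ*l + lᴴ*d) − lᴴ*(I_k − X*A)*N₁⁻¹*l, assume δ is invertible, and define b⋆ = δ⁻¹ * (dᴴ*N₁ − lᴴ) * X ∈ ℂ^{1×m} and the (k+1)×m matrix X' whose top k×m block is X − (d + (I_k − X*A) * N₁⁻¹ * l) * b⋆ and whose bottom row is b⋆. Then X' satisfies Â*X'*Â = Â, X'*Â*X' = X', (M*Â*X')ᴴ = M*Â*X' and (N*X'*Â)ᴴ = N*X'*Â; that is, X' is the weighted Moore-Penrose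 inverse of Â with respect to (M, N). -/

import Mathlib

open Matrix ComplexOrder

/-!
Since `c = 0` we have `a = A d`, so `Â = [A | a] = A [I | d]`. As `A (I - X A) = 0`, this gives
`Â X' = A X`, from which the first three Penrose equations follow at once.
For the fourth, put `q = dᴴ N₁ - lᴴ X A`. Then `b⋆ = δ⁻¹ q X`, `q X A = q`, and a block
computation gives `N X' = [I | d]ᴴ (N₁ X - qᴴ b⋆)`; hence
`N X' Â = [I | d]ᴴ (N₁ X A - qᴴ δ⁻¹ q) [I | d]`, which is Hermitian because `δ` is.
-/

variable {m n n' o R : Type*}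

theorem Matrix.IsHermitian.mul_eq_conjTranspose_mul [Fintype n] [NonUnitalSemiring R]
    [StarRing R] {N G : Matrix n n R} (hN : N.IsHermitian) (hNG : (N * G).IsHermitian) :
    N * G = Gᴴ * N := by
  rw [← hNG.eq, conjTranspose_mul, hN.eq]

theorem Matrix.IsHermitian.mul_nonsing_inv [Fintype n] [DecidableEq n] [CommRing R] [StarRing R]
    {N G : Matrix n n R} (hN : N.IsHermitian) (hNu : IsUnit N.det)
    (hNG : (N * G).IsHermitian) : (G * N⁻¹).IsHermitian := by
  have h := isHermitian_conjTranspose_mul_mul N⁻¹ hNG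
  rwa [hN.inv.eq, ← Matrix.mul_assoc, nonsing_inv_mul _ hNu, Matrix.one_mul] at h

-- The pivot `δ` of the partition step, with `G = X A`.
theorem isHermitian_pivot [Fintype n] [Fintype o] [DecidableEq n] [CommRing R] [StarRing R]
    {N₁ G : Matrix n n R} {ν : Matrix o o R} (hN₁ : N₁.IsHermitian) (hN₁u : IsUnit N₁.det)
    (hN₁G : (N₁ * G).IsHermitian) (hν : ν.IsHermitian) (l d : Matrix n o R) :
    (ν + dᴴ * N₁ * d - (dᴴ * l + lᴴ * d) - lᴴ * (1 - G) * N₁⁻¹ * l).IsHermitian := by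
  rw [Matrix.mul_assoc lᴴ (1 - G)]
  refine ((hν.add (isHermitian_conjTranspose_mul_mul d hN₁)).sub ?_).sub
    (isHermitian_conjTranspose_mul_mul l ?_)
  · simp [IsHermitian, add_comm]
  · rw [Matrix.sub_mul, Matrix.one_mul]
    exact hN₁.inv.sub (hN₁.mul_nonsing_inv hN₁u hN₁G)

structure IsWeightedMoorePenroseInverse [Fintype m] [Fintype n] [Semiring R] [Star R]
    (M : Matrix m m R) (N : Matrix n n R) (A : Matrix m n R) (X : Matrix n m R) : Prop where
  penrose₁ : A * X * A = A
  penrose₂ : X * A * X = X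
  penrose₃ : (M * A * X).IsHermitian
  penrose₄ : (N * X * A).IsHermitian

theorem isWeightedMoorePenroseInverse_mul_right [Fintype m] [Fintype n] [Fintype n']
    [Semiring R] [StarRing R] {M : Matrix m m R} {N' : Matrix n' n' R} {A : Matrix m n R}
    {X : Matrix n m R} {P : Matrix n n' R} {X' : Matrix n' m R} {Y : Matrix n m R}
    (h₁ : A * X * A = A) (h₃ : (M * A * X).IsHermitian)
    (hPX' : A * P * X' = A * X) (hX' : X' * (A * X) = X')
    (hN'X' : N' * X' = Pᴴ * Y) (hYA : (Y * A).IsHermitian) :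
    IsWeightedMoorePenroseInverse M N' (A * P) X' where
  penrose₁ := by rw [hPX', ← Matrix.mul_assoc, h₁]
  penrose₂ := by rw [Matrix.mul_assoc, hPX', hX']
  penrose₃ := by rwa [Matrix.mul_assoc M, hPX', ← Matrix.mul_assoc]
  penrose₄ := by
    rw [hN'X', ← Matrix.mul_assoc, Matrix.mul_assoc _ Y]
    exact isHermitian_conjTranspose_mul_mul P hYA

theorem mul_fromCols_one_mul_fromRows [Fintype n] [Fintype o] [DecidableEq n] [Ring R]
    {A : Matrix m n R} {X : Matrix n m R} {d u : Matrix n o R} (hu : A * u = A * d)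
    (b : Matrix o m R) :
    A * fromCols (1 : Matrix n n R) d * fromRows (X - u * b) b = A * X := by
  rw [Matrix.mul_assoc, fromCols_mul_fromRows, Matrix.one_mul, Matrix.mul_add, Matrix.mul_sub,
    ← Matrix.mul_assoc A u, hu, Matrix.mul_assoc]
  abel

theorem fromBlocks_mul_fromRows_sub_mul [Fintype n] [Fintype o] [DecidableEq n] [Ring R]
    [StarRing R] {N₁ : Matrix n n R} {l d u p : Matrix n o R} {ν δ : Matrix o o R}
    {X : Matrix n m R} {b : Matrix o m R}
    (hu : N₁ * u - l = p) (hν : ν - lᴴ * u = δ - dᴴ * p) (hb : δ * b = (dᴴ * N₁ - lᴴ) * X) :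
    fromBlocks N₁ l lᴴ ν * fromRows (X - u * b) b = (fromCols 1 d)ᴴ * (N₁ * X - p * b) := by
  rw [fromBlocks_mul_fromRows, conjTranspose_fromCols_eq_fromRows_conjTranspose, fromRows_mul,
    conjTranspose_one, Matrix.one_mul]
  congr 1
  · rw [← hu]
    simp only [Matrix.mul_sub, Matrix.sub_mul, Matrix.mul_assoc]
    abel
  · calc lᴴ * (X - u * b) + ν * b = lᴴ * X + (ν - lᴴ * u) * b := by
          simp only [Matrix.mul_sub, Matrix.sub_mul, Matrix.mul_assoc]; abel
      _ = lᴴ * X + δ * b - dᴴ * p * b := by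
          rw [hν, Matrix.sub_mul]; abel
      _ = dᴴ * (N₁ * X - p * b) := by
          rw [hb]; simp only [Matrix.mul_sub, Matrix.sub_mul, Matrix.mul_assoc]; abel

theorem fromBlocks_mul_fromRows_eq_conjTranspose_mul [Fintype m] [Fintype n] [Fintype o]
    [DecidableEq n] [DecidableEq o] [CommRing R] [StarRing R]
    {N₁ : Matrix n n R} {A : Matrix m n R} {X : Matrix n m R} {l d : Matrix n o R}
    {ν δ : Matrix o o R} {b : Matrix o m R} (hN₁ : N₁.IsHermitian) (hN₁u : IsUnit N₁.det)
    (hN₁XA : (N₁ * (X * A)).IsHermitian) (hd : X * A * d = d)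
    (hδ : δ = ν + dᴴ * N₁ * d - (dᴴ * l + lᴴ * d) - lᴴ * (1 - X * A) * N₁⁻¹ * l)
    (hδu : IsUnit δ.det) (hb : b = δ⁻¹ * (dᴴ * N₁ - lᴴ) * X) :
    fromBlocks N₁ l lᴴ ν * fromRows (X - (d + (1 - X * A) * N₁⁻¹ * l) * b) b =
      (fromCols 1 d)ᴴ * (N₁ * X - (dᴴ * N₁ - lᴴ * (X * A))ᴴ * b) := by
  have hqH : (dᴴ * N₁ - lᴴ * (X * A))ᴴ = N₁ * d - (X * A)ᴴ * l := by
    rw [conjTranspose_sub, conjTranspose_mul, conjTranspose_mul, hN₁.eq,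
      conjTranspose_conjTranspose, conjTranspose_conjTranspose]
  refine fromBlocks_mul_fromRows_sub_mul (δ := δ) ?_ ?_ ?_
  · have hN₁XAN₁ : (N₁ - (X * A)ᴴ * N₁) * N₁⁻¹ = 1 - (X * A)ᴴ := by
      rw [Matrix.sub_mul, Matrix.mul_assoc, mul_nonsing_inv _ hN₁u, Matrix.mul_one]
    rw [hqH, Matrix.mul_add, ← Matrix.mul_assoc, ← Matrix.mul_assoc, Matrix.mul_sub,
      Matrix.mul_one, hN₁.mul_eq_conjTranspose_mul hN₁XA, hN₁XAN₁, Matrix.sub_mul, Matrix.one_mul]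
    abel
  · have hdq : dᴴ * (N₁ * d - (X * A)ᴴ * l) = dᴴ * N₁ * d - dᴴ * l := by
      rw [Matrix.mul_sub, ← Matrix.mul_assoc dᴴ (X * A)ᴴ, ← conjTranspose_mul, hd,
        Matrix.mul_assoc]
    rw [hqH, hdq, hδ]
    simp only [Matrix.mul_add, Matrix.mul_assoc]
    abel
  · rw [hb, ← Matrix.mul_assoc, ← Matrix.mul_assoc, mul_nonsing_inv _ hδu, Matrix.one_mul]

theorem IsWeightedMoorePenroseInverse.fromCols_mul [Fintype m] [Fintype n] [Fintype o]
    [DecidableEq n] [DecidableEq o] [CommRing R] [StarRing R]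
    {M : Matrix m m R} {N₁ : Matrix n n R} {A : Matrix m n R} {X : Matrix n m R}
    (hX : IsWeightedMoorePenroseInverse M N₁ A X) (hN₁ : N₁.IsHermitian) (hN₁u : IsUnit N₁.det)
    {l d : Matrix n o R} {ν δ : Matrix o o R} (hν : ν.IsHermitian) (hd : X * A * d = d)
    (hδ : δ = ν + dᴴ * N₁ * d - (dᴴ * l + lᴴ * d) - lᴴ * (1 - X * A) * N₁⁻¹ * l)
    (hδu : IsUnit δ.det) {b : Matrix o m R} (hb : b = δ⁻¹ * (dᴴ * N₁ - lᴴ) * X) :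
    IsWeightedMoorePenroseInverse M (fromBlocks N₁ l lᴴ ν) (fromCols A (A * d))
      (fromRows (X - (d + (1 - X * A) * N₁⁻¹ * l) * b) b) := by
  have hN₁XA : (N₁ * (X * A)).IsHermitian := by rw [← Matrix.mul_assoc]; exact hX.penrose₄
  have hδh : δ.IsHermitian := hδ ▸ isHermitian_pivot hN₁ hN₁u hN₁XA hν l d
  set q := dᴴ * N₁ - lᴴ * (X * A) with hq
  have hqXA : q * (X * A) = q := by
    rw [hq, Matrix.sub_mul, Matrix.mul_assoc, hN₁.mul_eq_conjTranspose_mul hN₁XA,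
      ← Matrix.mul_assoc, ← conjTranspose_mul, hd, Matrix.mul_assoc,
      ← Matrix.mul_assoc (X * A), hX.penrose₂]
  have hbq : b = δ⁻¹ * q * X := by
    rw [hb, hq, Matrix.mul_assoc, Matrix.mul_assoc, Matrix.sub_mul, Matrix.sub_mul,
      Matrix.mul_assoc lᴴ, hX.penrose₂]
  have hbAX : b * (A * X) = b := by
    rw [hb, Matrix.mul_assoc, ← Matrix.mul_assoc X, hX.penrose₂]
  rw [show fromCols A (A * d) = A * fromCols 1 d by rw [mul_fromCols, Matrix.mul_one]]
  refine isWeightedMoorePenroseInverse_mul_right hX.penrose₁ hX.penrose₃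
    (mul_fromCols_one_mul_fromRows ?_ b) ?_
    (fromBlocks_mul_fromRows_eq_conjTranspose_mul hN₁ hN₁u hN₁XA hd hδ hδu hb) ?_
  · rw [Matrix.mul_add, ← Matrix.mul_assoc, ← Matrix.mul_assoc, Matrix.mul_sub,
      Matrix.mul_one, ← Matrix.mul_assoc, hX.penrose₁, sub_self, Matrix.zero_mul,
      Matrix.zero_mul, add_zero]
  · rw [fromRows_mul, hbAX, Matrix.sub_mul, Matrix.mul_assoc _ b, hbAX, ← Matrix.mul_assoc,
      hX.penrose₂]
  · rw [Matrix.sub_mul, hbq]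
    simp only [Matrix.mul_assoc]
    rw [hqXA, ← Matrix.mul_assoc qᴴ]
    exact hN₁XA.sub (isHermitian_conjTranspose_mul_mul q hδh.inv)

theorem weighted_moore_penrose_partition_step_c_eq_zero_general
    (m k : ℕ)
    (A : Matrix (Fin m) (Fin k) ℂ) (a : Matrix (Fin m) (Fin 1) ℂ)
    (M : Matrix (Fin m) (Fin m) ℂ)
    (N₁ : Matrix (Fin k) (Fin k) ℂ) (l : Matrix (Fin k) (Fin 1) ℂ)
    (ν : Matrix (Fin 1) (Fin 1) ℂ)
    (hN : (Matrix.fromBlocks N₁ l lᴴ ν).PosDef)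
    (X : Matrix (Fin k) (Fin m) ℂ)
    (hX1 : A * X * A = A) (hX2 : X * A * X = X)
    (hX3 : (M * A * X)ᴴ = M * A * X) (hX4 : (N₁ * X * A)ᴴ = N₁ * X * A)
    (d : Matrix (Fin k) (Fin 1) ℂ) (hd : d = X * a)
    (c : Matrix (Fin m) (Fin 1) ℂ) (hc : c = a - A * d) (hc0 : c = 0)
    (δ : Matrix (Fin 1) (Fin 1) ℂ)
    (hδ : δ = ν + dᴴ * N₁ * d - (dᴴ * l + lᴴ * d) - lᴴ * (1 - X * A) * N₁⁻¹ * l)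
    (hδu : IsUnit δ)
    (b : Matrix (Fin 1) (Fin m) ℂ) (hb : b = δ⁻¹ * (dᴴ * N₁ - lᴴ) * X)
    (X' : Matrix (Fin k ⊕ Fin 1) (Fin m) ℂ)
    (hX' : X' = Matrix.fromRows (X - (d + (1 - X * A) * N₁⁻¹ * l) * b) b) :
    (Matrix.fromCols A a) * X' * (Matrix.fromCols A a) = Matrix.fromCols A a ∧
    X' * (Matrix.fromCols A a) * X' = X' ∧
    (M * (Matrix.fromCols A a) * X')ᴴ = M * (Matrix.fromCols A a) * X' ∧
    ((Matrix.fromBlocks N₁ l lᴴ ν) * X' * (Matrix.fromCols A a))ᴴ =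
      (Matrix.fromBlocks N₁ l lᴴ ν) * X' * (Matrix.fromCols A a) := by
  have ha : a = A * d := sub_eq_zero.mp (hc.symm.trans hc0)
  have hN₁ : N₁.PosDef := hN.submatrix Sum.inl_injective
  obtain ⟨hN₁h, -, -, hνh⟩ := isHermitian_fromBlocks_iff.mp hN.isHermitian
  have hX : IsWeightedMoorePenroseInverse M N₁ A X := ⟨hX1, hX2, hX3, hX4⟩
  have hXAd : X * A * d = d := by rw [Matrix.mul_assoc, ← ha, hd]
  obtain ⟨h₁, h₂, h₃, h₄⟩ := hX.fromCols_mul hN₁h ((isUnit_iff_isUnit_det _).mp hN₁.isUnit) hνh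
    hXAd hδ ((isUnit_iff_isUnit_det _).mp hδu) hb
  rw [hX', ha]
  exact ⟨h₁, h₂, h₃, h₄⟩

/-- Recursive step of Wang's partitioning method (case `c = 0`): given the weighted
Moore-Penrose inverse `X` of `A` w.r.t. `(M, N₁)`, with `d = X*a`, `c = a - A*d = 0`,
`δ = ν + dᴴ*N₁*d - (dᴴ*l + lᴴ*d) - lᴴ*(I - X*A)*N₁⁻¹*l` invertible and
`b⋆ = δ⁻¹ * (dᴴ*N₁ - lᴴ) * X`, the weighted Moore-Penrose inverse of `[A | a]`
w.r.t. `(M, fromBlocks N₁ l lᴴ ν)` is obtained by stacking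
`X - (d + (I - X*A) * N₁⁻¹ * l) * b⋆` on top of the row `b⋆`. -/
theorem weighted_moore_penrose_partition_step_c_eq_zero
    (m k : ℕ) (hm : 0 < m) (hk : 0 < k)
    (A : Matrix (Fin m) (Fin k) ℂ) (a : Matrix (Fin m) (Fin 1) ℂ)
    (M : Matrix (Fin m) (Fin m) ℂ) (hM : M.PosDef)
    (N₁ : Matrix (Fin k) (Fin k) ℂ) (l : Matrix (Fin k) (Fin 1) ℂ)
    (ν : Matrix (Fin 1) (Fin 1) ℂ)
    (hN : (Matrix.fromBlocks N₁ l lᴴ ν).PosDef)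
    (X : Matrix (Fin k) (Fin m) ℂ)
    (hX1 : A * X * A = A) (hX2 : X * A * X = X)
    (hX3 : (M * A * X)ᴴ = M * A * X) (hX4 : (N₁ * X * A)ᴴ = N₁ * X * A)
    (d : Matrix (Fin k) (Fin 1) ℂ) (hd : d = X * a)
    (c : Matrix (Fin m) (Fin 1) ℂ) (hc : c = a - A * d) (hc0 : c = 0)
    (δ : Matrix (Fin 1) (Fin 1) ℂ)
    (hδ : δ = ν + dᴴ * N₁ * d - (dᴴ * l + lᴴ * d) - lᴴ * (1 - X * A) * N₁⁻¹ * l)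
    (hδu : IsUnit δ)
    (b : Matrix (Fin 1) (Fin m) ℂ) (hb : b = δ⁻¹ * (dᴴ * N₁ - lᴴ) * X)
    (X' : Matrix (Fin k ⊕ Fin 1) (Fin m) ℂ)
    (hX' : X' = Matrix.fromRows (X - (d + (1 - X * A) * N₁⁻¹ * l) * b) b) :
    (Matrix.fromCols A a) * X' * (Matrix.fromCols A a) = Matrix.fromCols A a ∧
    X' * (Matrix.fromCols A a) * X' = X' ∧
    (M * (Matrix.fromCols A a) * X')ᴴ = M * (Matrix.fromCols A a) * X' ∧
    ((Matrix.fromBlocks N₁ l lᴴ ν) * X' * (Matrix.fromCols A a))ᴴ =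
      (Matrix.fromBlocks N₁ l lᴴ ν) * X' * (Matrix.fromCols A a) :=
  weighted_moore_penrose_partition_step_c_eq_zero_general m k A a M N₁ l ν hN X hX1 hX2 hX3 hX4 d hd
    c hc hc0 δ hδ hδu b hb X' hX'
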